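/- Let V ⊆ ℝmax^n be a max-plus subsemimodule stable under directed sups and filtered infs, and let y ∈ ℝmax^n with y ∉ V. Then there exists z ∈ ℝmax^n with z ≥ y, all coordinates of z real (i.e., different from -∞), such that y ≤ P_V(z) fails, where P_V(z) denotes the componentwise supremum of {v ∈ V : v ≤ z}. -/
import Mathlib


noncomputable section

/-- `ℝmax = ℝ ∪ {-∞}`, the max-plus semifield. -/
abbrev Rmax := WithBot ℝ

/-- a max-plus subsemimodule of `ℝmax^n`: contains the bottom vector, stable
under componentwise max and under addition of scalars. -/
def MPSubmodule {n : ℕ} (V : Set (Fin n → Rmax)) : Prop :=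
  (fun _ => ⊥) ∈ V ∧ (∀ x ∈ V, ∀ y ∈ V, x ⊔ y ∈ V) ∧
    (∀ x ∈ V, ∀ lam : Rmax, (fun i => x i + lam) ∈ V)

/-- stability under sups of bounded directed subsets. -/
def DirStable {n : ℕ} (C : Set (Fin n → Rmax)) : Prop :=
  ∀ D ⊆ C, D.Nonempty → DirectedOn (· ≤ ·) D → BddAbove D → sSup D ∈ C

/-- stability under infs of filtered subsets. -/
def FiltStable {n : ℕ} (C : Set (Fin n → Rmax)) : Prop :=
  ∀ F ⊆ C, F.Nonempty → DirectedOn (· ≥ ·) F → sInf F ∈ C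

/-- the canonical projection onto `V`: `P_V(x) = sup {v ∈ V : v ≤ x}`. -/
def projV {n : ℕ} (V : Set (Fin n → Rmax)) (x : Fin n → Rmax) : Fin n → Rmax :=
  sSup {v | v ∈ V ∧ v ≤ x}

lemma projV_mem {n : ℕ} {V : Set (Fin n → Rmax)} (hmod : MPSubmodule V)
    (hdir : DirStable V) (z : Fin n → Rmax) : projV V z ∈ V := by
  apply hdir {v | v ∈ V ∧ v ≤ z} (fun v hv => hv.1)
    ⟨fun _ => ⊥, hmod.1, fun i => bot_le⟩
  · intro a ha b hb
    exact ⟨a ⊔ b, ⟨hmod.2.1 a ha.1 b hb.1, sup_le ha.2 hb.2⟩, le_sup_left, le_sup_right⟩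
  · exact ⟨z, fun v hv => hv.2⟩

lemma projV_le {n : ℕ} {V : Set (Fin n → Rmax)} (hmod : MPSubmodule V)
    (z : Fin n → Rmax) : projV V z ≤ z :=
  csSup_le ⟨fun _ => ⊥, hmod.1, fun i => bot_le⟩ (fun v hv => hv.2)

lemma projV_mono {n : ℕ} {V : Set (Fin n → Rmax)} (hmod : MPSubmodule V)
    {z w : Fin n → Rmax} (h : z ≤ w) : projV V z ≤ projV V w := by
  refine csSup_le_csSup ⟨w, fun v hv => hv.2⟩ ?_ (fun v hv => ⟨hv.1, hv.2.trans h⟩)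
  exact ⟨fun _ => ⊥, hmod.1, fun _ => bot_le⟩

/-- **If `V ⊆ ℝmax^n` is a max-plus subsemimodule stable under directed sups
and filtered infs, and `y ∉ V`, then there is `z ≥ y` with all coordinates
real such that `y ≤ P_V(z)` fails.** -/
theorem stmt13 {n : ℕ} (V : Set (Fin n → Rmax)) (hmod : MPSubmodule V)
    (hdir : DirStable V) (hfilt : FiltStable V)
    (y : Fin n → Rmax) (hy : y ∉ V) :
    ∃ z : Fin n → Rmax, y ≤ z ∧ (∀ i, z i ≠ ⊥) ∧ ¬ y ≤ projV V z := by
  by_contra hcon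
  push_neg at hcon
  set g : ℝ → (Fin n → Rmax) := fun t => projV V (fun i => y i ⊔ (t : Rmax)) with hg
  have hyz : ∀ t : ℝ, y ≤ fun i => y i ⊔ (t : Rmax) := fun t i => le_sup_left
  have hygt : ∀ t : ℝ, y ≤ g t := by
    intro t
    exact hcon _ (hyz t) (fun i => by
      simp [WithBot.coe_ne_bot])
  set F : Set (Fin n → Rmax) := Set.range g with hF
  have hFV : F ⊆ V := by
    rintro _ ⟨t, rfl⟩; exact projV_mem hmod hdir _
  have hFne : F.Nonempty := ⟨g 0, 0, rfl⟩
  have hFdir : DirectedOn (· ≥ ·) F := by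
    rintro _ ⟨t, rfl⟩ _ ⟨s, rfl⟩
    refine ⟨g (min t s), ⟨min t s, rfl⟩, ?_, ?_⟩
    · exact projV_mono hmod (fun i => sup_le_sup_left (WithBot.coe_le_coe.mpr (min_le_left t s)) _)
    · exact projV_mono hmod (fun i => sup_le_sup_left (WithBot.coe_le_coe.mpr (min_le_right t s)) _)
  have hinf : sInf F ∈ V := hfilt F hFV hFne hFdir
  have h1 : y ≤ sInf F := le_csInf hFne (by rintro _ ⟨t, rfl⟩; exact hygt t)
  have h2 : sInf F ≤ y := by
    intro i
    have hle : ∀ t : ℝ, sInf F i ≤ y i ⊔ (t : Rmax) := by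
      intro t
      exact le_trans (csInf_le (OrderBot.bddBelow F) ⟨t, rfl⟩ i) (projV_le hmod _ i)
    cases hyi : y i with
    | none =>
        rw [hyi] at hle
        simp only [WithBot.none_eq_bot, bot_sup_eq] at hle
        cases hv : sInf F i with
        | none => exact le_refl _
        | some x =>
            exfalso
            have h3 := hle (x - 1)
            rw [hv, WithBot.some_eq_coe, WithBot.coe_le_coe] at h3
            linarith
    | some r =>
        have := hle r
        rw [hyi] at this
        simpa [WithBot.some_eq_coe] using this
  exact hy (le_antisymm h1 h2 ▸ hinf)

end
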